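/- arXiv:1206.3881 — 3 statements merged into one kernel-verified Lean document; each statement's English description precedes it below -/
import Mathlib

section
/- For the density g(r; k, d) = k·d·r^(d-1)·(1 - r^d)^(k-1) on [0,1], with H_k = Σ_{i=1}^k 1/i, we have ∫₀¹ k·d·r^(d-1)·(1-r^d)^(k-1)·log(r) dr = -H_k/d, i.e. E[log r] = -H_k/d. -/
open Real intervalIntegral MeasureTheory Set Filter

noncomputable def harmonicNum (k : ℕ) : ℝ := ∑ i ∈ Finset.range k, (1 : ℝ) / (i + 1)

-- geometric identity
lemma geom_aux (x : ℝ) (k : ℕ) : 1 - (1-x)^k = x * ∑ j ∈ Finset.range k, (1-x)^j := by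
  have := geom_sum_mul (1-x) k
  linarith [this]

-- integrability
lemma integrable_aux (k : ℕ) (d : ℝ) (hd : 0 < d) :
    IntervalIntegrable (fun r : ℝ => (k:ℝ) * d * r ^ (d - 1) * (1 - r ^ d) ^ (k - 1) * Real.log r)
      volume 0 1 := by
  rw [intervalIntegrable_iff_integrableOn_Ioc_of_le (by norm_num)]
  have hg : IntegrableOn (fun r : ℝ => 2 * k * r ^ (d/2 - 1)) (Ioc (0:ℝ) 1) volume := by
    have := (intervalIntegrable_rpow' (a := 0) (b := 1) (r := d/2 - 1) (by linarith)).const_mul (2 * k)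
    rwa [intervalIntegrable_iff_integrableOn_Ioc_of_le (by norm_num)] at this
  refine hg.integrable.mono' ?_ ?_
  · apply ContinuousOn.aestronglyMeasurable _ measurableSet_Ioc
    intro r hr
    have h1 : ContinuousAt (fun r : ℝ => (k:ℝ) * d * r ^ (d - 1) * (1 - r ^ d) ^ (k - 1) * Real.log r) r := by
      have hrpow : ContinuousAt (fun r : ℝ => r ^ (d-1)) r :=
        Real.continuousAt_rpow_const r _ (Or.inl hr.1.ne')
      have hrpow2 : ContinuousAt (fun r : ℝ => r ^ d) r :=
        Real.continuousAt_rpow_const r _ (Or.inl hr.1.ne')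
      exact ((continuousAt_const.mul hrpow).mul
        ((continuousAt_const.sub hrpow2).pow _)).mul (Real.continuousAt_log hr.1.ne')
    exact h1.continuousWithinAt
  · rw [ae_restrict_iff' measurableSet_Ioc]
    filter_upwards with r hr
    obtain ⟨hr0, hr1⟩ := hr
    have hrd0 : (0:ℝ) ≤ r ^ d := Real.rpow_nonneg hr0.le d
    have hrd1 : r ^ d ≤ 1 := Real.rpow_le_one hr0.le hr1 hd.le
    have hpow : (1 - r ^ d) ^ (k-1) ≤ 1 := pow_le_one₀ (by linarith) (by linarith)
    have hlog : |Real.log r| ≤ (2/d) * r ^ (-(d/2)) := by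
      rw [abs_of_nonpos (Real.log_nonpos hr0.le hr1)]
      have := Real.log_le_rpow_div (x := r⁻¹) (by positivity) (half_pos hd)
      rw [Real.log_inv, Real.inv_rpow hr0.le, ← Real.rpow_neg hr0.le] at this
      calc -Real.log r ≤ r ^ (-(d/2)) / (d/2) := this
        _ = (2/d) * r ^ (-(d/2)) := by ring
    have h1 : ‖(k:ℝ) * d * r ^ (d - 1) * (1 - r ^ d) ^ (k - 1) * Real.log r‖
        ≤ (k:ℝ) * d * r ^ (d-1) * 1 * ((2/d) * r ^ (-(d/2))) := by
      rw [norm_eq_abs, abs_mul]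
      apply mul_le_mul _ hlog (abs_nonneg _) (by positivity)
      rw [abs_mul]
      have h2 : |(k:ℝ) * d * r ^ (d-1)| = (k:ℝ) * d * r ^ (d-1) := abs_of_nonneg (by positivity)
      rw [h2]
      apply mul_le_mul_of_nonneg_left _ (by positivity)
      rw [abs_of_nonneg (pow_nonneg (by linarith) _)]
      exact hpow
    refine h1.trans (le_of_eq ?_)
    have hd' : d ≠ 0 := hd.ne'
    field_simp
    have key : r ^ (d-1) * r ^ (-(d/2)) = r ^ ((d-2)/2) := by
      rw [← Real.rpow_add hr0]; ring_nf
    linear_combination (k:ℝ) * key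

theorem expectation_log_minDist (k : ℕ) (hk : 0 < k) (d : ℝ) (hd : 0 < d) :
    ∫ r in (0 : ℝ)..1,
        k * d * r ^ (d - 1) * (1 - r ^ d) ^ (k - 1) * Real.log r = -harmonicNum k / d := by
  set G : ℝ → ℝ := fun r =>
    Real.log r * (1 - (1 - r ^ d) ^ k) + ∑ j ∈ Finset.range k, (1 - r ^ d) ^ (j+1) / (d * (j+1))
    with hG
  have hderiv : ∀ x ∈ Ioo (0:ℝ) 1, HasDerivAt G
      ((k:ℝ) * d * x ^ (d - 1) * (1 - x ^ d) ^ (k - 1) * Real.log x) x := by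
    intro x hx
    have hx0 : (0:ℝ) < x := hx.1
    have hrpow : HasDerivAt (fun r : ℝ => r ^ d) (d * x ^ (d-1)) x :=
      Real.hasDerivAt_rpow_const (Or.inl hx0.ne')
    have hsub : HasDerivAt (fun r : ℝ => 1 - r ^ d) (-(d * x ^ (d-1))) x := hrpow.const_sub 1
    have hpowk : HasDerivAt (fun r : ℝ => (1 - r ^ d) ^ k)
        ((k:ℝ) * (1 - x ^ d) ^ (k-1) * (-(d * x ^ (d-1)))) x := hsub.pow k
    have h1 : HasDerivAt (fun r : ℝ => Real.log r * (1 - (1 - r ^ d) ^ k))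
        (x⁻¹ * (1 - (1 - x ^ d) ^ k)
          + Real.log x * (-(((k:ℝ) * (1 - x ^ d) ^ (k-1) * (-(d * x ^ (d-1))))))) x :=
      (Real.hasDerivAt_log hx0.ne').mul (hpowk.const_sub 1)
    have h2 : HasDerivAt (fun r : ℝ => ∑ j ∈ Finset.range k, (1 - r ^ d) ^ (j+1) / (d * (j+1)))
        (∑ j ∈ Finset.range k,
          (((j:ℝ)+1) * (1 - x ^ d) ^ j * (-(d * x ^ (d-1)))) / (d * (j+1))) x := by
      apply HasDerivAt.fun_sum
      intro j hj
      have := (hsub.pow (j+1)).div_const (d * (j+1))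
      simpa using this
    have := h1.fun_add h2
    refine this.congr_deriv ?_
    symm
    have hsum : ∑ j ∈ Finset.range k,
        (((j:ℝ)+1) * (1 - x ^ d) ^ j * (-(d * x ^ (d-1)))) / (d * (j+1))
        = -(x ^ (d-1) * ∑ j ∈ Finset.range k, (1 - x ^ d) ^ j) := by
      rw [Finset.mul_sum, ← Finset.sum_neg_distrib]
      apply Finset.sum_congr rfl
      intro j hj
      have hj1 : ((j:ℝ)+1) ≠ 0 := by positivity
      field_simp
    rw [hsum, geom_aux (x ^ d) k]
    have hxd : x⁻¹ * x ^ d = x ^ (d-1) := by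
      rw [← Real.rpow_neg_one x, ← Real.rpow_add hx0]; ring_nf
    linear_combination (-(∑ j ∈ Finset.range k, (1 - x ^ d) ^ j)) * hxd
  have ha : Filter.Tendsto G (nhdsWithin 0 (Ioi (0:ℝ))) (nhds (harmonicNum k / d)) := by
    have hG' : ∀ r ∈ Ioi (0:ℝ), G r =
        (Real.log r * r ^ d) * (∑ j ∈ Finset.range k, (1 - r ^ d) ^ j)
          + ∑ j ∈ Finset.range k, (1 - r ^ d) ^ (j+1) / (d * (j+1)) := by
      intro r hr
      rw [hG]
      simp only
      rw [geom_aux (r ^ d) k]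
      ring
    have hval : (0:ℝ) * k + ∑ j ∈ Finset.range k, (1 - (0:ℝ)) ^ (j+1) / (d * (j+1))
        = harmonicNum k / d := by
      rw [harmonicNum, Finset.sum_div, zero_mul, zero_add]
      apply Finset.sum_congr rfl
      intro j hj
      rw [sub_zero, one_pow, div_div, mul_comm]
    rw [← hval]
    apply Filter.Tendsto.congr' (by
      filter_upwards [self_mem_nhdsWithin] with r hr
      exact (hG' r hr).symm)
    have hrd : Filter.Tendsto (fun r : ℝ => r ^ d) (nhdsWithin 0 (Ioi (0:ℝ))) (nhds 0) := by
      have : ContinuousAt (fun r : ℝ => r ^ d) 0 :=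
        Real.continuousAt_rpow_const 0 d (Or.inr hd.le)
      simpa [Real.zero_rpow hd.ne'] using this.continuousWithinAt.tendsto
    apply Filter.Tendsto.add
    · apply Filter.Tendsto.mul
      · exact tendsto_log_mul_rpow_nhdsGT_zero hd
      · have : Filter.Tendsto (fun r : ℝ => ∑ j ∈ Finset.range k, (1 - r ^ d) ^ j)
            (nhdsWithin 0 (Ioi (0:ℝ))) (nhds (∑ j ∈ Finset.range k, (1 - (0:ℝ)) ^ j)) :=
          tendsto_finset_sum _ (fun j hj => (tendsto_const_nhds.sub hrd).pow j)
        simpa using this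
    · exact tendsto_finset_sum _
        (fun j hj => ((tendsto_const_nhds.sub hrd).pow (j+1)).div_const _)
  have hb : Filter.Tendsto G (nhdsWithin 1 (Iio (1:ℝ))) (nhds 0) := by
    have hrpow : ContinuousAt (fun r : ℝ => r ^ d) 1 :=
      Real.continuousAt_rpow_const 1 d (Or.inl one_ne_zero)
    have h1 : Filter.Tendsto (fun r : ℝ => Real.log r * (1 - (1 - r ^ d) ^ k)) (nhds 1)
        (nhds (Real.log 1 * (1 - (1 - (1:ℝ) ^ d) ^ k))) :=
      (Real.continuousAt_log one_ne_zero).mul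
        (continuousAt_const.sub ((continuousAt_const.sub hrpow).pow k))
    have h2 : Filter.Tendsto
        (fun r : ℝ => ∑ j ∈ Finset.range k, (1 - r ^ d) ^ (j+1) / (d * (j+1))) (nhds 1)
        (nhds (∑ j ∈ Finset.range k, (1 - (1:ℝ) ^ d) ^ (j+1) / (d * (j+1)))) :=
      tendsto_finset_sum _
        (fun j hj => ((continuousAt_const.sub hrpow).pow (j+1)).div_const _)
    have := (h1.add h2).mono_left (nhdsWithin_le_nhds (s := Iio (1:ℝ)))
    simpa [Real.one_rpow] using this
  rw [intervalIntegral.integral_eq_sub_of_hasDerivAt_of_tendsto (by norm_num) hderiv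
    (integrable_aux k d hd) ha hb]
  ring
end

section
/- The KL divergence between two von Mises densities with the same mean direction ν and concentrations τ₁, τ₂ simplifies to log(I₀(τ₂)/I₀(τ₁)) + (τ₁ - τ₂)·I₁(τ₁)/I₀(τ₁), and this quantity is nonnegative and equals 0 iff τ₁ = τ₂. -/
open Real intervalIntegral

/-- Modified Bessel function of the first kind of order 0. -/
noncomputable def besselI0 (τ : ℝ) : ℝ := (1 / π) * ∫ t in (0 : ℝ)..π, Real.exp (τ * Real.cos t)

/-- Modified Bessel function of the first kind of order 1. -/
noncomputable def besselI1 (τ : ℝ) : ℝ :=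
  (1 / π) * ∫ t in (0 : ℝ)..π, Real.exp (τ * Real.cos t) * Real.cos t

/-- The von Mises density with mean direction `ν` and concentration `τ`. -/
noncomputable def vonMisesDensity (ν τ θ : ℝ) : ℝ :=
  Real.exp (τ * Real.cos (θ - ν)) / (2 * π * besselI0 τ)

/-- KL divergence between two von Mises densities over `[-π, π]`. -/
noncomputable def klVonMises (ν₁ τ₁ ν₂ τ₂ : ℝ) : ℝ :=
  ∫ θ in (-π)..π,
    vonMisesDensity ν₁ τ₁ θ * Real.log (vonMisesDensity ν₁ τ₁ θ / vonMisesDensity ν₂ τ₂ θ)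

/-!
With equal means, `log (p₁ / p₂) = log (I₀ τ₂ / I₀ τ₁) + (τ₁ - τ₂) cos (θ - ν)` is affine in
`cos (θ - ν)`, so the divergence only involves the moments `∫ p₁ = 1` and
`∫ p₁ cos (θ - ν) = I₁ τ₁ / I₀ τ₁`; both reduce to the integrals over `[0, π]` defining the Bessel
functions by periodicity and evenness of the cosine.

Nonnegativity is Gibbs' inequality: `p log (p / q) - p + q = q · klFun (p / q) ≥ 0` pointwise, and
`∫ p = ∫ q`. If the divergence vanishes, this continuous nonnegative integrand vanishes on
`(-π, π]`, so `p₁ = p₂` there, which makes `(τ₁ - τ₂) cos (θ - ν)` constant in `θ`; hence `τ₁ = τ₂`.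
-/

open Set Function InformationTheory

lemma Function.Periodic.integral_comp_sub_eq_two_mul_of_even {g : ℝ → ℝ} {L : ℝ}
    (hg : Continuous g) (hper : Periodic g (2 * L)) (heven : ∀ x, g (-x) = g x) (ν : ℝ) :
    ∫ θ in (-L)..L, g (θ - ν) = 2 * ∫ t in (0 : ℝ)..L, g t := by
  have hshift : ∫ t in (-L - ν)..(-L - ν) + 2 * L, g t = ∫ t in (-L)..(-L) + 2 * L, g t :=
    hper.intervalIntegral_add_eq _ _
  have hneg : ∫ t in (-L)..0, g t = ∫ t in (0 : ℝ)..L, g t := by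
    simpa [heven] using (integral_comp_neg (a := 0) (b := L) (f := g)).symm
  rw [integral_comp_sub_right, show L - ν = -L - ν + 2 * L by ring, hshift,
    show -L + 2 * L = L by ring, ← integral_add_adjacent_intervals (b := 0)
      (hg.intervalIntegrable _ _) (hg.intervalIntegrable _ _), hneg]
  ring

lemma integral_exp_mul_cos_sub (ν τ : ℝ) :
    ∫ θ in (-π)..π, exp (τ * cos (θ - ν)) = 2 * π * besselI0 τ := by
  rw [Periodic.integral_comp_sub_eq_two_mul_of_even (g := fun t ↦ exp (τ * cos t)) (by fun_prop)
    (fun x ↦ by simp [cos_add_two_pi]) (fun x ↦ by simp), besselI0]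
  field_simp

lemma integral_exp_mul_cos_sub_mul_cos_sub (ν τ : ℝ) :
    ∫ θ in (-π)..π, exp (τ * cos (θ - ν)) * cos (θ - ν) = 2 * π * besselI1 τ := by
  rw [Periodic.integral_comp_sub_eq_two_mul_of_even (g := fun t ↦ exp (τ * cos t) * cos t)
    (by fun_prop) (fun x ↦ by simp [cos_add_two_pi]) (fun x ↦ by simp), besselI1]
  field_simp

lemma besselI0_pos (τ : ℝ) : 0 < besselI0 τ :=
  mul_pos (by positivity) <| intervalIntegral_pos_of_pos
    ((by fun_prop : Continuous fun t ↦ exp (τ * cos t)).intervalIntegrable _ _)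
    (fun _ ↦ exp_pos _) pi_pos

lemma vonMisesDensity_pos (ν τ θ : ℝ) : 0 < vonMisesDensity ν τ θ := by
  have := besselI0_pos τ
  unfold vonMisesDensity
  positivity

@[fun_prop]
lemma continuous_vonMisesDensity (ν τ : ℝ) : Continuous (vonMisesDensity ν τ) := by
  unfold vonMisesDensity
  fun_prop

lemma integral_vonMisesDensity (ν τ : ℝ) : ∫ θ in (-π)..π, vonMisesDensity ν τ θ = 1 := by
  have := besselI0_pos τ
  simp only [vonMisesDensity, integral_div, integral_exp_mul_cos_sub]
  field_simp

lemma integral_vonMisesDensity_mul_cos_sub (ν τ : ℝ) :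
    ∫ θ in (-π)..π, vonMisesDensity ν τ θ * cos (θ - ν) = besselI1 τ / besselI0 τ := by
  have := besselI0_pos τ
  simp only [vonMisesDensity, div_mul_eq_mul_div, integral_div,
    integral_exp_mul_cos_sub_mul_cos_sub]
  field_simp

lemma log_vonMisesDensity_div (ν τ₁ τ₂ θ : ℝ) :
    log (vonMisesDensity ν τ₁ θ / vonMisesDensity ν τ₂ θ)
      = log (besselI0 τ₂ / besselI0 τ₁) + (τ₁ - τ₂) * cos (θ - ν) := by
  have h₁ := besselI0_pos τ₁
  have h₂ := besselI0_pos τ₂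
  rw [log_div (vonMisesDensity_pos ν τ₁ θ).ne' (vonMisesDensity_pos ν τ₂ θ).ne',
    vonMisesDensity, vonMisesDensity, log_div (by positivity) (by positivity),
    log_div (by positivity) (by positivity), log_div h₂.ne' h₁.ne',
    log_mul (by positivity) h₁.ne', log_mul (by positivity) h₂.ne', log_exp, log_exp]
  ring

lemma klVonMises_same_mean_eq (ν τ₁ τ₂ : ℝ) :
    klVonMises ν τ₁ ν τ₂ =
      log (besselI0 τ₂ / besselI0 τ₁) + (τ₁ - τ₂) * (besselI1 τ₁ / besselI0 τ₁) := by
  have hmoment : IntervalIntegrable (fun θ ↦ vonMisesDensity ν τ₁ θ * cos (θ - ν))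
      MeasureTheory.volume (-π) π := by
    apply Continuous.intervalIntegrable
    fun_prop
  calc klVonMises ν τ₁ ν τ₂
      = ∫ θ in (-π)..π, (log (besselI0 τ₂ / besselI0 τ₁) * vonMisesDensity ν τ₁ θ
          + (τ₁ - τ₂) * (vonMisesDensity ν τ₁ θ * cos (θ - ν))) := by
        refine integral_congr fun θ _ ↦ ?_
        simp only [log_vonMisesDensity_div]
        ring
    _ = _ := by
        rw [integral_add
            (((continuous_vonMisesDensity ν τ₁).intervalIntegrable _ _).const_mul _)
            (hmoment.const_mul _),
          integral_const_mul, integral_const_mul, integral_vonMisesDensity,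
          integral_vonMisesDensity_mul_cos_sub, mul_one]

section Gibbs

variable {p q : ℝ → ℝ} {a b : ℝ}

lemma mul_log_div_eq_mul_klFun_add_sub {x y : ℝ} (hy : y ≠ 0) :
    x * log (x / y) = y * klFun (x / y) + x - y := by
  rw [klFun_apply]
  field_simp
  ring

lemma integral_mul_log_div_eq_integral_mul_klFun (hp : Continuous p) (hq : Continuous q)
    (hq₀ : ∀ x, 0 < q x) (hpq : ∫ x in a..b, p x = ∫ x in a..b, q x) :
    ∫ x in a..b, p x * log (p x / q x) = ∫ x in a..b, q x * klFun (p x / q x) := by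
  have hcont : Continuous fun x ↦ q x * klFun (p x / q x) :=
    hq.mul (continuous_klFun.comp (hp.div hq fun x ↦ (hq₀ x).ne'))
  simp only [mul_log_div_eq_mul_klFun_add_sub (hq₀ _).ne']
  have hsum : IntervalIntegrable (fun x ↦ q x * klFun (p x / q x) + p x) MeasureTheory.volume a b :=
    (hcont.add hp).intervalIntegrable _ _
  rw [integral_sub hsum (hq.intervalIntegrable _ _),
    integral_add (hcont.intervalIntegrable _ _) (hp.intervalIntegrable _ _), hpq,
    add_sub_cancel_right]

lemma integral_mul_log_div_nonneg (hab : a ≤ b) (hp : Continuous p) (hq : Continuous q)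
    (hp₀ : ∀ x, 0 ≤ p x) (hq₀ : ∀ x, 0 < q x) (hpq : ∫ x in a..b, p x = ∫ x in a..b, q x) :
    0 ≤ ∫ x in a..b, p x * log (p x / q x) := by
  rw [integral_mul_log_div_eq_integral_mul_klFun hp hq hq₀ hpq]
  exact integral_nonneg hab fun x _ ↦
    mul_nonneg (hq₀ x).le (klFun_nonneg (div_nonneg (hp₀ x) (hq₀ x).le))

lemma eqOn_Ioc_of_integral_mul_log_div_eq_zero (hab : a ≤ b) (hp : Continuous p)
    (hq : Continuous q) (hp₀ : ∀ x, 0 ≤ p x) (hq₀ : ∀ x, 0 < q x)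
    (hpq : ∫ x in a..b, p x = ∫ x in a..b, q x) (h : ∫ x in a..b, p x * log (p x / q x) = 0) :
    EqOn p q (Ioc a b) := by
  have hcont : Continuous fun x ↦ q x * klFun (p x / q x) :=
    hq.mul (continuous_klFun.comp (hp.div hq fun x ↦ (hq₀ x).ne'))
  have hnonneg : ∀ x, 0 ≤ q x * klFun (p x / q x) := fun x ↦
    mul_nonneg (hq₀ x).le (klFun_nonneg (div_nonneg (hp₀ x) (hq₀ x).le))
  rw [integral_mul_log_div_eq_integral_mul_klFun hp hq hq₀ hpq,
    integral_eq_zero_iff_of_le_of_nonneg_ae hab (Filter.Eventually.of_forall hnonneg)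
      (hcont.intervalIntegrable _ _)] at h
  intro x hx
  have hx₀ : q x * klFun (p x / q x) = 0 :=
    MeasureTheory.Measure.eqOn_Ioc_of_ae_eq _ h hcont.continuousOn continuousOn_const hx
  rw [mul_eq_zero, klFun_eq_zero_iff (div_nonneg (hp₀ x) (hq₀ x).le),
    div_eq_one_iff_eq (hq₀ x).ne'] at hx₀
  exact hx₀.resolve_left (hq₀ x).ne'

end Gibbs

lemma klVonMises_nonneg (ν₁ τ₁ ν₂ τ₂ : ℝ) : 0 ≤ klVonMises ν₁ τ₁ ν₂ τ₂ :=
  integral_mul_log_div_nonneg (by linarith [pi_pos]) (continuous_vonMisesDensity ν₁ τ₁)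
    (continuous_vonMisesDensity ν₂ τ₂) (fun θ ↦ (vonMisesDensity_pos ν₁ τ₁ θ).le)
    (vonMisesDensity_pos ν₂ τ₂) (by rw [integral_vonMisesDensity, integral_vonMisesDensity])

lemma eqOn_vonMisesDensity_of_klVonMises_eq_zero {ν₁ τ₁ ν₂ τ₂ : ℝ}
    (h : klVonMises ν₁ τ₁ ν₂ τ₂ = 0) :
    EqOn (vonMisesDensity ν₁ τ₁) (vonMisesDensity ν₂ τ₂) (Ioc (-π) π) :=
  eqOn_Ioc_of_integral_mul_log_div_eq_zero (by linarith [pi_pos])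
    (continuous_vonMisesDensity ν₁ τ₁) (continuous_vonMisesDensity ν₂ τ₂)
    (fun θ ↦ (vonMisesDensity_pos ν₁ τ₁ θ).le) (vonMisesDensity_pos ν₂ τ₂)
    (by rw [integral_vonMisesDensity, integral_vonMisesDensity]) h

lemma eq_zero_of_forall_mul_cos_sub_eq {D c ν : ℝ} (h : ∀ θ ∈ Ioc (-π) π, D * cos (θ - ν) = c) :
    D = 0 := by
  have hπ := pi_pos
  have h₀ := h 0 ⟨by linarith, hπ.le⟩
  have h₁ := h (π / 2) ⟨by linarith, by linarith⟩
  have h₂ := h (-(π / 2)) ⟨by linarith, by linarith⟩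
  rw [zero_sub, cos_neg] at h₀
  rw [cos_pi_div_two_sub] at h₁
  rw [show -(π / 2) - ν = -(ν + π / 2) by ring, cos_neg, cos_add_pi_div_two] at h₂
  have hsin : D * sin ν = 0 := by linarith
  have hcos : D * cos ν = 0 := by linarith
  have hsq : D ^ 2 = (D * sin ν) ^ 2 + (D * cos ν) ^ 2 := by
    linear_combination D ^ 2 * (sin_sq_add_cos_sq ν).symm
  rw [hsin, hcos] at hsq
  exact pow_eq_zero_iff two_ne_zero |>.mp (by simpa using hsq)

theorem kl_vonMises_same_mean_general (ν τ₁ τ₂ : ℝ) :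
    klVonMises ν τ₁ ν τ₂ =
        Real.log (besselI0 τ₂ / besselI0 τ₁) + (τ₁ - τ₂) * (besselI1 τ₁ / besselI0 τ₁) ∧
      0 ≤ klVonMises ν τ₁ ν τ₂ ∧ (klVonMises ν τ₁ ν τ₂ = 0 ↔ τ₁ = τ₂) := by
  refine ⟨klVonMises_same_mean_eq ν τ₁ τ₂, klVonMises_nonneg ν τ₁ ν τ₂, fun h ↦ ?_, ?_⟩
  · have hD : τ₁ - τ₂ = 0 := by
      refine eq_zero_of_forall_mul_cos_sub_eq (ν := ν) (c := -log (besselI0 τ₂ / besselI0 τ₁))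
        fun θ hθ ↦ ?_
      have hlog := log_vonMisesDensity_div ν τ₁ τ₂ θ
      rw [eqOn_vonMisesDensity_of_klVonMises_eq_zero h hθ,
        div_self (vonMisesDensity_pos ν τ₂ θ).ne', log_one] at hlog
      linarith
    exact sub_eq_zero.mp hD
  · rintro rfl
    simp [klVonMises_same_mean_eq, div_self (besselI0_pos τ₁).ne']

theorem kl_vonMises_same_mean (ν τ₁ τ₂ : ℝ) (hτ₁ : 0 < τ₁) (hτ₂ : 0 < τ₂) :
    klVonMises ν τ₁ ν τ₂ =
        Real.log (besselI0 τ₂ / besselI0 τ₁) + (τ₁ - τ₂) * (besselI1 τ₁ / besselI0 τ₁) ∧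
      0 ≤ klVonMises ν τ₁ ν τ₂ ∧ (klVonMises ν τ₁ ν τ₂ = 0 ↔ τ₁ = τ₂) :=
  kl_vonMises_same_mean_general ν τ₁ τ₂
end

section
/- The function A(τ) = I₁(τ)/I₀(τ), where I₀ and I₁ are the modified Bessel functions of the first kind of orders 0 and 1, is strictly increasing on (0, ∞), satisfies A(0) = 0 and A(τ) < 1 for all τ ≥ 0, and A(τ) → 1 as τ → ∞. -/
open Real Filter

/-- The mean resultant length map `A(τ) = I₁(τ)/I₀(τ)`. -/
noncomputable def besselRatio (τ : ℝ) : ℝ := besselI1 τ / besselI0 τ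

/-!
`besselRatio τ = vonMisesIntegral cos τ / vonMisesIntegral 1 τ` is the mean of `cos` under the
probability density proportional to `e^{τ cos t}` on `[0, π]`. Differentiating under the integral
sign shows that its derivative is the variance of `cos` under that density, which is positive, and
`1 - besselRatio τ` is the mean of `1 - cos`, positive too. As `τ → ∞` the density concentrates at
`t = 0`: for `c < cos δ` the mass where `cos t < c` is at most `π e^{τ c}`, exponentially smaller
than the mass `≥ δ e^{τ cos δ}` on `[0, δ]`, so `1 - besselRatio τ ≤ 1 - c + o(1)` for every
`c < 1`.
-/

open MeasureTheory Set Topology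

noncomputable def vonMisesIntegral (g : ℝ → ℝ) (τ : ℝ) : ℝ :=
  ∫ t in (0 : ℝ)..π, exp (τ * cos t) * g t

section VonMisesIntegral

variable {g h : ℝ → ℝ}

theorem intervalIntegrable_exp_mul_cos_mul (τ : ℝ) (hg : Continuous g) (a b : ℝ) :
    IntervalIntegrable (fun t => exp (τ * cos t) * g t) volume a b :=
  (by fun_prop : Continuous fun t => exp (τ * cos t) * g t).intervalIntegrable a b

theorem vonMisesIntegral_sub (τ : ℝ) (hg : Continuous g) (hh : Continuous h) :
    vonMisesIntegral (fun t => g t - h t) τ = vonMisesIntegral g τ - vonMisesIntegral h τ := by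
  simp only [vonMisesIntegral, mul_sub]
  exact intervalIntegral.integral_sub (intervalIntegrable_exp_mul_cos_mul τ hg 0 π)
    (intervalIntegrable_exp_mul_cos_mul τ hh 0 π)

theorem vonMisesIntegral_sq_cos_sub (τ m : ℝ) :
    vonMisesIntegral (fun t => (cos t - m) ^ 2) τ =
      vonMisesIntegral (fun t => cos t * cos t) τ - 2 * m * vonMisesIntegral cos τ +
        m ^ 2 * vonMisesIntegral (fun _ => 1) τ := by
  have hcos := intervalIntegrable_exp_mul_cos_mul τ continuous_cos 0 π
  have hcos2 := intervalIntegrable_exp_mul_cos_mul τ (g := fun t => cos t * cos t) (by fun_prop) 0 π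
  have hone := intervalIntegrable_exp_mul_cos_mul τ (g := fun _ => 1) continuous_const 0 π
  have hexpand : (fun t => exp (τ * cos t) * (cos t - m) ^ 2) = fun t =>
      (exp (τ * cos t) * (cos t * cos t) - 2 * m * (exp (τ * cos t) * cos t)) +
        m ^ 2 * (exp (τ * cos t) * 1) := by
    funext t; ring
  rw [vonMisesIntegral, hexpand,
    intervalIntegral.integral_add (hcos2.sub (hcos.const_mul _)) (hone.const_mul _),
    intervalIntegral.integral_sub hcos2 (hcos.const_mul _), intervalIntegral.integral_const_mul,
    intervalIntegral.integral_const_mul]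
  rfl

theorem vonMisesIntegral_pos (τ : ℝ) (hg : Continuous g) (hg0 : ∀ t ∈ Icc 0 π, 0 ≤ g t)
    {t₀ : ℝ} (ht₀ : t₀ ∈ Icc 0 π) (hgt₀ : 0 < g t₀) : 0 < vonMisesIntegral g τ :=
  intervalIntegral.integral_pos pi_pos (by fun_prop)
    (fun t ht => mul_nonneg (exp_pos _).le (hg0 t (Ioc_subset_Icc_self ht)))
    ⟨t₀, ht₀, mul_pos (exp_pos _) hgt₀⟩

theorem vonMisesIntegral_one_pos (τ : ℝ) : 0 < vonMisesIntegral (fun _ => 1) τ :=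
  vonMisesIntegral_pos τ continuous_const (fun _ _ => zero_le_one) (left_mem_Icc.2 pi_pos.le)
    one_pos

theorem hasDerivAt_vonMisesIntegral (τ : ℝ) (hg : Continuous g) :
    HasDerivAt (vonMisesIntegral g) (vonMisesIntegral (fun t => cos t * g t) τ) τ := by
  have hderiv (x t : ℝ) :
      HasDerivAt (fun x => exp (x * cos t) * g t) (exp (x * cos t) * (cos t * g t)) x := by
    simpa [mul_comm, mul_left_comm, mul_assoc] using
      (((hasDerivAt_id x).mul_const (cos t)).exp).mul_const (g t)
  have hbound : ∀ x ∈ Metric.ball τ 1, ∀ t,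
      ‖exp (x * cos t) * (cos t * g t)‖ ≤ exp (|τ| + 1) * |g t| := by
    intro x hx t
    have hx' : |x| ≤ |τ| + 1 := by
      linarith [abs_sub_abs_le_abs_sub x τ, Real.dist_eq x τ ▸ Metric.mem_ball.1 hx]
    have hcos := abs_cos_le_one t
    rw [norm_mul, norm_mul, Real.norm_eq_abs, Real.norm_eq_abs, Real.norm_eq_abs, abs_exp]
    have hexp : exp (x * cos t) ≤ exp (|τ| + 1) := exp_le_exp.2 <| calc
      x * cos t ≤ |x| * |cos t| := (le_abs_self _).trans (abs_mul _ _).le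
      _ ≤ |τ| + 1 := by nlinarith [abs_nonneg x, abs_nonneg (cos t)]
    calc exp (x * cos t) * (|cos t| * |g t|) ≤ exp (|τ| + 1) * (1 * |g t|) := by gcongr
      _ = exp (|τ| + 1) * |g t| := by rw [one_mul]
  exact (intervalIntegral.hasDerivAt_integral_of_dominated_loc_of_deriv_le
    (Metric.ball_mem_nhds τ one_pos)
    (Eventually.of_forall fun x => (by fun_prop : Continuous fun t => exp (x * cos t) * g t)
      |>.aestronglyMeasurable)
    (intervalIntegrable_exp_mul_cos_mul τ hg 0 π)
    (by fun_prop : Continuous fun t => exp (τ * cos t) * (cos t * g t)).aestronglyMeasurable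
    (Eventually.of_forall fun t _ x hx => hbound x hx t)
    ((by fun_prop : Continuous fun t => exp (|τ| + 1) * |g t|).intervalIntegrable 0 π)
    (Eventually.of_forall fun t _ x _ => hderiv x t)).2

end VonMisesIntegral

theorem besselRatio_eq (τ : ℝ) :
    besselRatio τ = vonMisesIntegral cos τ / vonMisesIntegral (fun _ => 1) τ := by
  simp only [besselRatio, besselI0, besselI1, vonMisesIntegral, mul_one]
  exact mul_div_mul_left _ _ (by positivity)

theorem besselRatio_zero : besselRatio 0 = 0 := by
  simp [besselRatio_eq, vonMisesIntegral]

theorem besselRatio_lt_one (τ : ℝ) : besselRatio τ < 1 := by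
  rw [besselRatio_eq, div_lt_one (vonMisesIntegral_one_pos τ), ← sub_pos,
    ← vonMisesIntegral_sub τ continuous_const continuous_cos]
  exact vonMisesIntegral_pos τ (by fun_prop) (fun t _ => sub_nonneg.2 (cos_le_one t))
    (right_mem_Icc.2 pi_pos.le) (by norm_num)

theorem hasDerivAt_besselRatio (τ : ℝ) :
    HasDerivAt besselRatio (vonMisesIntegral (fun t => (cos t - besselRatio τ) ^ 2) τ /
      vonMisesIntegral (fun _ => 1) τ) τ := by
  have hJ0 := vonMisesIntegral_one_pos τ
  have hquot := (hasDerivAt_vonMisesIntegral τ continuous_cos).div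
    (hasDerivAt_vonMisesIntegral τ continuous_const (g := fun _ => 1)) hJ0.ne'
  simp only [mul_one] at hquot
  refine (hquot.congr_deriv ?_).congr_of_eventuallyEq (Eventually.of_forall besselRatio_eq)
  rw [vonMisesIntegral_sq_cos_sub, besselRatio_eq]
  field_simp
  ring

theorem strictMono_besselRatio : StrictMono besselRatio :=
  strictMono_of_hasDerivAt_pos hasDerivAt_besselRatio fun τ =>
    div_pos (vonMisesIntegral_pos τ (by fun_prop) (fun t _ => sq_nonneg _)
      (left_mem_Icc.2 pi_pos.le) (by simpa using pow_pos (sub_pos.2 (besselRatio_lt_one τ)) 2))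
      (vonMisesIntegral_one_pos τ)

theorem vonMisesIntegral_one_sub_cos_le {τ c : ℝ} (hτ : 0 ≤ τ) (hc : c ≤ 1) :
    vonMisesIntegral (fun t => 1 - cos t) τ ≤
      (1 - c) * vonMisesIntegral (fun _ => 1) τ + 2 * π * exp (τ * c) := by
  have hpointwise (t : ℝ) :
      exp (τ * cos t) * (1 - cos t) ≤ (1 - c) * (exp (τ * cos t) * 1) + 2 * exp (τ * c) := by
    have hexp := exp_pos (τ * cos t)
    rcases le_or_gt c (cos t) with hct | hct
    · nlinarith [exp_pos (τ * c)]
    · have : exp (τ * cos t) ≤ exp (τ * c) := exp_le_exp.2 (mul_le_mul_of_nonneg_left hct.le hτ)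
      nlinarith [neg_one_le_cos t]
  calc vonMisesIntegral (fun t => 1 - cos t) τ
      ≤ ∫ t in (0 : ℝ)..π, ((1 - c) * (exp (τ * cos t) * 1) + 2 * exp (τ * c)) :=
        intervalIntegral.integral_mono_on pi_pos.le
          (intervalIntegrable_exp_mul_cos_mul τ (by fun_prop) 0 π)
          ((by fun_prop : Continuous fun t => (1 - c) * (exp (τ * cos t) * 1) + 2 * exp (τ * c))
            |>.intervalIntegrable 0 π)
          fun t _ => hpointwise t
    _ = (1 - c) * vonMisesIntegral (fun _ => 1) τ + 2 * π * exp (τ * c) := by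
        rw [intervalIntegral.integral_add
          ((intervalIntegrable_exp_mul_cos_mul τ continuous_const 0 π).const_mul _)
          intervalIntegrable_const, intervalIntegral.integral_const_mul,
          intervalIntegral.integral_const, smul_eq_mul, vonMisesIntegral]
        ring

theorem mul_exp_le_vonMisesIntegral_one {τ δ : ℝ} (hτ : 0 ≤ τ) (hδ : δ ∈ Icc 0 π) :
    δ * exp (τ * cos δ) ≤ vonMisesIntegral (fun _ => 1) τ :=
  calc δ * exp (τ * cos δ) = ∫ _ in (0 : ℝ)..δ, exp (τ * cos δ) := by simp
    _ ≤ ∫ t in (0 : ℝ)..δ, exp (τ * cos t) * 1 :=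
        intervalIntegral.integral_mono_on hδ.1 intervalIntegrable_const
          (intervalIntegrable_exp_mul_cos_mul τ continuous_const 0 δ) fun t ht => by
            simpa using exp_le_exp.2 <| mul_le_mul_of_nonneg_left
              (cos_le_cos_of_nonneg_of_le_pi ht.1 hδ.2 ht.2) hτ
    _ ≤ vonMisesIntegral (fun _ => 1) τ :=
        intervalIntegral.integral_mono_interval le_rfl hδ.1 hδ.2
          (ae_of_all _ fun t => by positivity)
          (intervalIntegrable_exp_mul_cos_mul τ continuous_const 0 π)

theorem one_sub_besselRatio_le {τ c δ : ℝ} (hτ : 0 ≤ τ) (hc : c ≤ 1) (hδ : δ ∈ Ioc 0 π) :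
    1 - besselRatio τ ≤ 1 - c + 2 * π / δ * exp (-(τ * (cos δ - c))) := by
  have hJ0 := vonMisesIntegral_one_pos τ
  have hupper := vonMisesIntegral_one_sub_cos_le hτ hc
  rw [vonMisesIntegral_sub τ continuous_const continuous_cos] at hupper
  have htail : 2 * π * exp (τ * c) ≤
      2 * π / δ * exp (-(τ * (cos δ - c))) * vonMisesIntegral (fun _ => 1) τ := calc
    2 * π * exp (τ * c) = 2 * π / δ * exp (-(τ * (cos δ - c))) * (δ * exp (τ * cos δ)) := by
      rw [show τ * c = -(τ * (cos δ - c)) + τ * cos δ by ring, exp_add]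
      field_simp [hδ.1.ne']
    _ ≤ _ := mul_le_mul_of_nonneg_left
        (mul_exp_le_vonMisesIntegral_one hτ (Ioc_subset_Icc_self hδ))
        (by have := hδ.1; positivity)
  rw [besselRatio_eq, one_sub_div hJ0.ne', div_le_iff₀ hJ0]
  linarith

theorem tendsto_besselRatio_atTop : Tendsto besselRatio atTop (𝓝 1) := by
  refine tendsto_order.2 ⟨fun a ha => ?_, fun a ha => Eventually.of_forall fun τ =>
    (besselRatio_lt_one τ).trans ha⟩
  obtain ⟨c, hac, hc1⟩ := exists_between (max_lt ha one_pos : max a 0 < 1)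
  have hc0 : 0 ≤ c := (le_max_right a 0).trans hac.le
  set δ := arccos ((1 + c) / 2)
  have hδ : δ ∈ Ioc 0 π := ⟨arccos_pos.2 (by linarith), arccos_le_pi _⟩
  have hcosδ : cos δ = (1 + c) / 2 := cos_arccos (by linarith) (by linarith)
  have hdecay : Tendsto (fun τ => 2 * π / δ * exp (-(τ * (cos δ - c)))) atTop (𝓝 0) := by
    simpa using ((tendsto_exp_neg_atTop_nhds_zero.comp
      (tendsto_id.atTop_mul_const (by linarith : 0 < cos δ - c))).const_mul (2 * π / δ))
  filter_upwards [hdecay.eventually_lt_const (sub_pos.2 ((le_max_left a 0).trans_lt hac)),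
    eventually_ge_atTop 0] with τ hsmall hτ
  linarith [one_sub_besselRatio_le hτ hc1.le hδ]

theorem besselRatio_properties :
    StrictMonoOn besselRatio (Set.Ioi (0 : ℝ)) ∧ besselRatio 0 = 0 ∧
      (∀ τ : ℝ, 0 ≤ τ → besselRatio τ < 1) ∧
      Tendsto besselRatio atTop (nhds 1) :=
  ⟨strictMono_besselRatio.strictMonoOn _, besselRatio_zero, fun τ _ => besselRatio_lt_one τ,
    tendsto_besselRatio_atTop⟩
end
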